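/- Let X be a permutation class and Y a class that is contained in Y₁ ⊙ Y₂ ⊙ ⋯ ⊙ Y_k for classes Y₁,…,Y_k. Then X[Y] ⊆ X[Y₁] ⊙ ⋯ ⊙ X[Y_k] and Y[X] ⊆ Y₁[X] ⊙ ⋯ ⊙ Y_k[X]. -/
import Mathlib


/-- A permutation of some finite length `n`, as a bijection of `Fin n`. -/
abbrev PPerm : Type := Σ n : ℕ, Equiv.Perm (Fin n)

/-- `Contains π σ` : the pattern `σ` occurs in (is contained in) `π`. -/
def Contains (π σ : PPerm) : Prop :=
  ∃ f : Fin σ.1 → Fin π.1, StrictMono f ∧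
    ∀ i j, σ.2 i < σ.2 j ↔ π.2 (f i) < π.2 (f j)

/-- A permutation class: a set of permutations closed downwards under containment. -/
def IsPermClass (C : Set PPerm) : Prop :=
  ∀ π ∈ C, ∀ σ : PPerm, Contains π σ → σ ∈ C

/-- `σ` is (exactly) the pattern of the set `S` of points of `π`. -/
def PatternOf (π : PPerm) (S : Set (Fin π.1)) (σ : PPerm) : Prop :=
  ∃ f : Fin σ.1 → Fin π.1, StrictMono f ∧ Set.range f = S ∧
    ∀ i j, σ.2 i < σ.2 j ↔ π.2 (f i) < π.2 (f j)

/-- The points of `π` lying in `S` contain an occurrence of `σ`. -/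
def ContainsIn (π : PPerm) (S : Set (Fin π.1)) (σ : PPerm) : Prop :=
  ∃ f : Fin σ.1 → Fin π.1, StrictMono f ∧ (∀ i, f i ∈ S) ∧
    ∀ i j, σ.2 i < σ.2 j ↔ π.2 (f i) < π.2 (f j)

/-- `π` is a merge of `σ` and `τ`: its points split into a part with pattern `σ`
and a part with pattern `τ`. -/
def IsMerge (π σ τ : PPerm) : Prop :=
  ∃ S : Set (Fin π.1), PatternOf π S σ ∧ PatternOf π Sᶜ τ

/-- Merge of two classes. -/
def MergeCl (C D : Set PPerm) : Set PPerm :=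
  {π | ∃ σ ∈ C, ∃ τ ∈ D, IsMerge π σ τ}

/-- The empty permutation. -/
def pempty : PPerm := ⟨0, 1⟩

/-- The singleton permutation `1`. -/
def pone : PPerm := ⟨1, 1⟩

/-- Iterated merge of a list of classes. -/
def MergeAll : List (Set PPerm) → Set PPerm
  | [] => {pempty}
  | [C] => C
  | C :: D :: Cs => MergeCl C (MergeAll (D :: Cs))

/-- A class is splittable if it is contained in the merge of finitely many
of its proper subclasses. -/
def Splittable (C : Set PPerm) : Prop :=
  ∃ Cs : List (Set PPerm), Cs ≠ [] ∧
    (∀ D ∈ Cs, IsPermClass D ∧ D ⊆ C ∧ D ≠ C) ∧ C ⊆ MergeAll Cs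

/-- A class is atomic if it is not the union of two proper subclasses. -/
def Atomic (C : Set PPerm) : Prop :=
  ¬ ∃ D E : Set PPerm, IsPermClass D ∧ IsPermClass E ∧
      D ⊆ C ∧ D ≠ C ∧ E ⊆ C ∧ E ≠ C ∧ C = D ∪ E

/-- Inflation `A[B]` of a class `A` by a class `B`: `π` decomposes into
consecutive nonempty blocks (given by the fibres of the monotone surjection `g`),
the relative order of distinct blocks follows `σ ∈ A`, and each block has its
pattern in `B`. -/
def Inflate (A B : Set PPerm) : Set PPerm :=
  {π | ∃ σ ∈ A, ∃ g : Fin π.1 → Fin σ.1, Monotone g ∧ Function.Surjective g ∧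
    (∀ p q, g p ≠ g q → (π.2 p < π.2 q ↔ σ.2 (g p) < σ.2 (g q))) ∧
    ∀ b : Fin σ.1, ∃ τ ∈ B, PatternOf π {p | g p = b} τ}

/-- Direct sum `σ ⊕ τ`. -/
def psum (σ τ : PPerm) : PPerm :=
  ⟨σ.1 + τ.1, finSumFinEquiv.permCongr (σ.2.sumCongr τ.2)⟩

/-- Skew sum `σ ⊖ τ`. -/
def pskew (σ τ : PPerm) : PPerm :=
  ⟨σ.1 + τ.1,
    finSumFinEquiv.symm.trans ((σ.2.sumCongr τ.2).trans
      ((Equiv.sumComm (Fin σ.1) (Fin τ.1)).trans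
        (finSumFinEquiv.trans (finCongr (Nat.add_comm τ.1 σ.1)))))⟩

/-- Sum-decomposable: a direct sum of two nonempty permutations. -/
def SumDecomp (π : PPerm) : Prop :=
  ∃ σ τ : PPerm, 0 < σ.1 ∧ 0 < τ.1 ∧ π = psum σ τ

/-- Skew-decomposable: a skew sum of two nonempty permutations. -/
def SkewDecomp (π : PPerm) : Prop :=
  ∃ σ τ : PPerm, 0 < σ.1 ∧ 0 < τ.1 ∧ π = pskew σ τ

def SumClosed (C : Set PPerm) : Prop := ∀ σ ∈ C, ∀ τ ∈ C, psum σ τ ∈ C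

def SkewClosed (C : Set PPerm) : Prop := ∀ σ ∈ C, ∀ τ ∈ C, pskew σ τ ∈ C

/-- The class of permutations avoiding the pattern `σ`. -/
def Av (σ : PPerm) : Set PPerm := {π | ¬ Contains π σ}

/-- The basis of a class: minimal permutations not belonging to it. -/
def PBasis (C : Set PPerm) : Set PPerm :=
  {π | π ∉ C ∧ ∀ σ : PPerm, Contains π σ → σ ≠ π → σ ∈ C}

/-- An interval of `π`: a set of points contiguous in positions and in values. -/
def IsInterval (π : PPerm) (S : Set (Fin π.1)) : Prop :=
  (∀ a ∈ S, ∀ b ∈ S, ∀ c, a ≤ c → c ≤ b → c ∈ S) ∧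
  (∀ a ∈ S, ∀ b ∈ S, ∀ c, π.2 a ≤ π.2 c → π.2 c ≤ π.2 b → c ∈ S)

/-- A simple permutation: its only intervals are the subsingletons and the whole. -/
def SimplePerm (π : PPerm) : Prop :=
  ∀ S : Set (Fin π.1), IsInterval π S → S.Subsingleton ∨ S = Set.univ

/-- Build a permutation from a function with an explicit inverse. -/
def mkP {n : ℕ} (f g : Fin n → Fin n)
    (h₁ : ∀ i, g (f i) = i) (h₂ : ∀ i, f (g i) = i) : PPerm :=
  ⟨n, ⟨f, g, h₁, h₂⟩⟩

def p12 : PPerm := ⟨2, 1⟩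
def p21 : PPerm := mkP ![1,0] ![1,0] (by decide) (by decide)
def p213 : PPerm := mkP ![1,0,2] ![1,0,2] (by decide) (by decide)
def p231 : PPerm := mkP ![1,2,0] ![2,0,1] (by decide) (by decide)
def p312 : PPerm := mkP ![2,0,1] ![1,2,0] (by decide) (by decide)
def p1234 : PPerm := ⟨4, 1⟩
def p2143 : PPerm := mkP ![1,0,3,2] ![1,0,3,2] (by decide) (by decide)
def p3412 : PPerm := mkP ![2,3,0,1] ![2,3,0,1] (by decide) (by decide)
def p4321 : PPerm := mkP ![3,2,1,0] ![3,2,1,0] (by decide) (by decide)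
def p2413 : PPerm := mkP ![1,3,0,2] ![2,0,3,1] (by decide) (by decide)
def p3142 : PPerm := mkP ![2,0,3,1] ![1,3,0,2] (by decide) (by decide)

/-- The class `I` of increasing permutations. -/
def IncCl : Set PPerm := Av p21
/-- The class `D` of decreasing permutations. -/
def DecCl : Set PPerm := Av p12
/-- The class `Av(213)`. -/
def Av213 : Set PPerm := Av p213
/-- The class `L = Av(231, 312)` of layered permutations. -/
def Layered : Set PPerm := Av p231 ∩ Av p312
/-- Separable permutations, characterised by avoidance of `2413` and `3142`. -/
def SepA : Set PPerm := Av p2413 ∩ Av p3142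
/-- Separable permutations avoiding every element of `F`. -/
def Avs (F : Set PPerm) : Set PPerm := {π ∈ SepA | ∀ τ ∈ F, ¬ Contains π τ}
/-- The class of separable permutations, defined as the smallest permutation class
containing `1` and closed under direct sums and skew sums. -/
def SepCl : Set PPerm :=
  ⋂₀ {C : Set PPerm | IsPermClass C ∧ pone ∈ C ∧
      ∀ σ ∈ C, ∀ τ ∈ C, psum σ τ ∈ C ∧ pskew σ τ ∈ C}
lemma exists_patternOf (π : PPerm) (S : Set (Fin π.1)) : ∃ σ, PatternOf π S σ := by
  classical
  obtain ⟨n, p⟩ := π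
  set s : Finset (Fin n) := S.toFinset with hs
  set t : Finset (Fin n) := s.image p with ht
  have htcard : t.card = s.card := Finset.card_image_of_injective s p.injective
  let e1 := s.orderIsoOfFin rfl
  let e2 := t.orderIsoOfFin htcard
  have hmem : ∀ i : Fin s.card, p (e1 i) ∈ t := fun i =>
    Finset.mem_image_of_mem p (e1 i).2
  let q : Fin s.card → Fin s.card := fun i => e2.symm ⟨p (e1 i), hmem i⟩
  have hqinj : Function.Injective q := by
    intro i j hij
    have := congrArg (fun x => ((e2 x : t) : Fin n)) hij
    simp only [q, OrderIso.apply_symm_apply] at this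
    exact e1.injective (Subtype.ext (p.injective this))
  let perm : Equiv.Perm (Fin s.card) :=
    Equiv.ofBijective q (Finite.injective_iff_bijective.mp hqinj)
  refine ⟨⟨s.card, perm⟩, fun i => (e1 i : Fin n), ?_, ?_, ?_⟩
  · intro i j hij
    exact Subtype.coe_lt_coe.mpr (e1.strictMono hij)
  · ext x
    simp only [Set.mem_range]
    constructor
    · rintro ⟨i, rfl⟩
      exact (Set.mem_toFinset.mp (e1 i).2)
    · intro hx
      have hx' : x ∈ s := Set.mem_toFinset.mpr hx
      obtain ⟨i, hi⟩ := e1.surjective ⟨x, hx'⟩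
      exact ⟨i, congrArg Subtype.val hi⟩
  · intro i j
    have hcoe : ∀ k, ((e2 (q k) : t) : Fin n) = p (e1 k) := fun k => by simp [q]
    show perm i < perm j ↔ _
    have hp : ∀ k, perm k = q k := fun _ => rfl
    rw [hp, hp, ← e2.lt_iff_lt, ← Subtype.coe_lt_coe, hcoe, hcoe]

lemma patternOf_contains {π σ : PPerm} {S : Set (Fin π.1)} (h : PatternOf π S σ) :
    Contains π σ := by
  obtain ⟨f, h1, _, h3⟩ := h
  exact ⟨f, h1, h3⟩

lemma patternOf_trans {π τ α : PPerm} {S : Set (Fin τ.1)}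
    (e : Fin τ.1 → Fin π.1) (he : StrictMono e)
    (hord : ∀ i j, τ.2 i < τ.2 j ↔ π.2 (e i) < π.2 (e j))
    (h2 : PatternOf τ S α) : PatternOf π (e '' S) α := by
  obtain ⟨f, hf1, hf2, hf3⟩ := h2
  refine ⟨e ∘ f, he.comp hf1, ?_, fun i j => (hf3 i j).trans (hord _ _)⟩
  rw [Set.range_comp, hf2]

lemma inflate_mono {A A' B B' : Set PPerm} (hA : A ⊆ A') (hB : B ⊆ B') :
    Inflate A B ⊆ Inflate A' B' := by
  rintro π ⟨σ, hσ, g, h1, h2, h3, h4⟩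
  exact ⟨σ, hA hσ, g, h1, h2, h3, fun b =>
    (h4 b).imp fun τ ⟨ht, hp⟩ => ⟨hB ht, hp⟩⟩

lemma mergeCl_mono {A A' B B' : Set PPerm} (hA : A ⊆ A') (hB : B ⊆ B') :
    MergeCl A B ⊆ MergeCl A' B' := by
  rintro π ⟨σ, hσ, τ, hτ, hm⟩
  exact ⟨σ, hA hσ, τ, hB hτ, hm⟩

lemma lemmaE (π σ : PPerm) (g : Fin π.1 → Fin σ.1) (hmono : Monotone g)
    (hcross : ∀ p q, g p ≠ g q → (π.2 p < π.2 q ↔ σ.2 (g p) < σ.2 (g q)))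
    (T : Set (Fin π.1)) (σ' : PPerm) (B' : Set PPerm)
    (hσ' : PatternOf σ {b | ∃ p ∈ T, g p = b} σ')
    (hB : ∀ b, (∃ p ∈ T, g p = b) → ∃ τ ∈ B', PatternOf π (T ∩ {p | g p = b}) τ) :
    ∃ ρ, PatternOf π T ρ ∧ ρ ∈ Inflate {σ'} B' := by
  classical
  obtain ⟨ρ, f, hf1, hf2, hf3⟩ := exists_patternOf π T
  obtain ⟨h, hh1, hh2, hh3⟩ := hσ'
  have hhinj : Function.Injective h := hh1.injective
  have hfinj : Function.Injective f := hf1.injective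
  have hmemT : ∀ i, f i ∈ T := fun i => hf2 ▸ Set.mem_range_self i
  have hgfmem : ∀ i, g (f i) ∈ Set.range h := by
    intro i; rw [hh2]; exact ⟨f i, hmemT i, rfl⟩
  let g'' : Fin ρ.1 → Fin σ'.1 := fun i => (hgfmem i).choose
  have hg'' : ∀ i, h (g'' i) = g (f i) := fun i => (hgfmem i).choose_spec
  refine ⟨ρ, ⟨f, hf1, hf2, hf3⟩, σ', rfl, g'', ?_, ?_, ?_, ?_⟩
  · intro i j hij
    have : h (g'' i) ≤ h (g'' j) := by
      rw [hg'', hg'']; exact hmono (hf1.monotone hij)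
    exact hh1.le_iff_le.mp this
  · intro b'
    have hmem2 : h b' ∈ {b | ∃ p ∈ T, g p = b} := hh2.subset (Set.mem_range_self b')
    obtain ⟨p, hpT, hpb⟩ := hmem2
    rw [← hf2] at hpT
    obtain ⟨i, rfl⟩ := hpT
    exact ⟨i, hhinj (by rw [hg'', hpb])⟩
  · intro i j hne
    have hne' : g (f i) ≠ g (f j) := by
      rw [← hg'', ← hg'']; exact fun hc => hne (hhinj hc)
    rw [hf3, hh3, hg'', hg'']
    exact hcross _ _ hne'
  · intro b'
    obtain ⟨τ, hτB, e, he1, he2, he3⟩ :=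
      hB (h b') (hh2.subset (Set.mem_range_self b'))
    have heT : ∀ j, e j ∈ Set.range f := by
      intro j
      rw [hf2]
      exact (he2.subset (Set.mem_range_self j)).1
    let e' : Fin τ.1 → Fin ρ.1 := fun j => (heT j).choose
    have he' : ∀ j, f (e' j) = e j := fun j => (heT j).choose_spec
    refine ⟨τ, hτB, e', ?_, ?_, ?_⟩
    · intro a b hab
      have : f (e' a) < f (e' b) := by rw [he', he']; exact he1 hab
      exact hf1.lt_iff_lt.mp this
    · ext i
      simp only [Set.mem_range, Set.mem_setOf_eq]
      constructor
      · rintro ⟨j, rfl⟩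
        have : e j ∈ T ∩ {p | g p = h b'} := he2.subset (Set.mem_range_self j)
        apply hhinj
        rw [hg'', he']
        exact this.2
      · intro hi
        have : f i ∈ T ∩ {p | g p = h b'} :=
          ⟨hmemT i, by rw [Set.mem_setOf_eq, ← hg'', hi]⟩
        rw [← he2] at this
        obtain ⟨j, hj⟩ := this
        exact ⟨j, hfinj (by rw [he', hj])⟩
    · intro a b
      rw [he3, hf3, he', he']

lemma eq_pempty {π : PPerm} (h : π.1 = 0) : π = pempty := by
  obtain ⟨n, p⟩ := π
  cases h
  exact congrArg (Sigma.mk 0) (Equiv.ext fun x => x.elim0)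

lemma inflate_empty_left {X Y : Set PPerm} (hY : Y ⊆ {pempty}) :
    Inflate X Y ⊆ {pempty} := by
  rintro π ⟨σ, hσ, g, _, _, _, hblk⟩
  rcases Nat.eq_zero_or_pos π.1 with h0 | hpos
  · exact eq_pempty h0
  · exfalso
    set p₀ : Fin π.1 := ⟨0, hpos⟩
    obtain ⟨τ, hτY, f, _, hrange, _⟩ := hblk (g p₀)
    have hτ : τ = pempty := hY hτY
    subst hτ
    obtain ⟨i, _⟩ := hrange.symm.subset (show p₀ ∈ {p | g p = g p₀} from rfl)
    exact i.elim0

lemma inflate_empty_right {X Y : Set PPerm} (hY : Y ⊆ {pempty}) :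
    Inflate Y X ⊆ {pempty} := by
  rintro π ⟨σ, hσ, g, _, _, _, _⟩
  rcases Nat.eq_zero_or_pos π.1 with h0 | hpos
  · exact eq_pempty h0
  · exfalso
    have hσe : σ = pempty := hY hσ
    subst hσe
    exact (g ⟨0, hpos⟩).elim0

lemma lemmaB (A B X : Set PPerm) :
    Inflate (MergeCl A B) X ⊆ MergeCl (Inflate A X) (Inflate B X) := by
  rintro π ⟨σ, ⟨α, hαA, β, hβB, S, hSα, hSβ⟩, g, hmono, hsurj, hcross, hblk⟩
  set T : Set (Fin π.1) := g ⁻¹' S with hT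
  have hset1 : {b | ∃ p ∈ T, g p = b} = S := by
    ext b
    constructor
    · rintro ⟨p, hp, rfl⟩; exact hp
    · intro hb; obtain ⟨p, rfl⟩ := hsurj b; exact ⟨p, hb, rfl⟩
  have hset2 : {b | ∃ p ∈ Tᶜ, g p = b} = Sᶜ := by
    ext b
    constructor
    · rintro ⟨p, hp, rfl⟩; exact hp
    · intro hb; obtain ⟨p, rfl⟩ := hsurj b; exact ⟨p, hb, rfl⟩
  obtain ⟨ρ₁, hρ₁p, hρ₁m⟩ := lemmaE π σ g hmono hcross T α X
    (by rw [hset1]; exact hSα)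
    (by
      intro b hb
      have hbS : b ∈ S := by rw [← hset1]; exact hb
      have : T ∩ {p | g p = b} = {p | g p = b} := by
        ext p
        refine ⟨fun hp => hp.2, fun hp => ⟨?_, hp⟩⟩
        show g p ∈ S
        rw [hp]; exact hbS
      rw [this]
      exact hblk b)
  obtain ⟨ρ₂, hρ₂p, hρ₂m⟩ := lemmaE π σ g hmono hcross Tᶜ β X
    (by rw [hset2]; exact hSβ)
    (by
      intro b hb
      have hbS : b ∈ Sᶜ := by rw [← hset2]; exact hb
      have : Tᶜ ∩ {p | g p = b} = {p | g p = b} := by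
        ext p
        refine ⟨fun hp => hp.2, fun hp => ⟨?_, hp⟩⟩
        show g p ∉ S
        rw [hp]; exact hbS
      rw [this]
      exact hblk b)
  exact ⟨ρ₁, inflate_mono (Set.singleton_subset_iff.mpr hαA) (subset_refl X) hρ₁m,
    ρ₂, inflate_mono (Set.singleton_subset_iff.mpr hβB) (subset_refl X) hρ₂m,
    T, hρ₁p, hρ₂p⟩

lemma lemmaA {X : Set PPerm} (hX : IsPermClass X) (A B : Set PPerm) :
    Inflate X (MergeCl A B) ⊆ MergeCl (Inflate X A) (Inflate X B) := by
  rintro π ⟨σ, hσX, g, hmono, hsurj, hcross, hblk⟩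
  choose τ hτ hpat using hblk
  choose α hαA β hβB Sb hS1 hS2 using hτ
  choose e he1 he2 he3 using hpat
  have heinj : ∀ b, Function.Injective (e b) := fun b => (he1 b).injective
  have hfib : ∀ b i, g (e b i) = b := fun b i =>
    (he2 b).subset (Set.mem_range_self i)
  set T : Set (Fin π.1) := ⋃ b, (e b) '' (Sb b) with hTdef
  have hmemT : ∀ b (s : Set (Fin (τ b).1)), e b '' s ⊆ T → True := fun _ _ _ => trivial
  have hint1 : ∀ b, T ∩ {p | g p = b} = e b '' (Sb b) := by
    intro b
    ext p
    constructor
    · rintro ⟨hpT, hpg⟩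
      obtain ⟨_, ⟨b', rfl⟩, i, hiS, rfl⟩ := hpT
      have : b' = b := by rw [← hpg, hfib]
      subst this
      exact ⟨i, hiS, rfl⟩
    · rintro ⟨i, hiS, rfl⟩
      exact ⟨Set.mem_iUnion.mpr ⟨b, ⟨i, hiS, rfl⟩⟩, hfib b i⟩
  have hint2 : ∀ b, Tᶜ ∩ {p | g p = b} = e b '' (Sb b)ᶜ := by
    intro b
    ext p
    constructor
    · rintro ⟨hpT, hpg⟩
      have : p ∈ Set.range (e b) := by rw [he2]; exact hpg
      obtain ⟨i, rfl⟩ := this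
      refine ⟨i, fun hiS => hpT (Set.mem_iUnion.mpr ⟨b, ⟨i, hiS, rfl⟩⟩), rfl⟩
    · rintro ⟨i, hiS, rfl⟩
      refine ⟨?_, hfib b i⟩
      intro hpT
      obtain ⟨_, ⟨b', rfl⟩, j, hjS, hj⟩ := hpT
      have hb' : b' = b := by rw [← hfib b i, ← hj, hfib]
      subst hb'
      exact hiS (heinj b' hj ▸ hjS)
  obtain ⟨σ₁, hσ₁⟩ := exists_patternOf σ {b | ∃ p ∈ T, g p = b}
  obtain ⟨σ₂, hσ₂⟩ := exists_patternOf σ {b | ∃ p ∈ Tᶜ, g p = b}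
  obtain ⟨ρ₁, hρ₁p, hρ₁m⟩ := lemmaE π σ g hmono hcross T σ₁ A hσ₁
    (by
      intro b _
      refine ⟨α b, hαA b, ?_⟩
      rw [hint1]
      exact patternOf_trans (e b) (he1 b) (he3 b) (hS1 b))
  obtain ⟨ρ₂, hρ₂p, hρ₂m⟩ := lemmaE π σ g hmono hcross Tᶜ σ₂ B hσ₂
    (by
      intro b _
      refine ⟨β b, hβB b, ?_⟩
      rw [hint2]
      exact patternOf_trans (e b) (he1 b) (he3 b) (hS2 b))
  have hσ₁X : σ₁ ∈ X := hX σ hσX σ₁ (patternOf_contains hσ₁)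
  have hσ₂X : σ₂ ∈ X := hX σ hσX σ₂ (patternOf_contains hσ₂)
  exact ⟨ρ₁, inflate_mono (Set.singleton_subset_iff.mpr hσ₁X) (subset_refl A) hρ₁m,
    ρ₂, inflate_mono (Set.singleton_subset_iff.mpr hσ₂X) (subset_refl B) hρ₂m,
    T, hρ₁p, hρ₂p⟩

lemma main1 {X : Set PPerm} (hX : IsPermClass X) :
    ∀ (Ys : List (Set PPerm)) (Y : Set PPerm), Y ⊆ MergeAll Ys →
      Inflate X Y ⊆ MergeAll (Ys.map fun Z => Inflate X Z) := by
  intro Ys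
  induction Ys with
  | nil => exact fun Y h => inflate_empty_left h
  | cons Z Ws ih =>
    intro Y h
    cases Ws with
    | nil => exact inflate_mono (subset_refl X) h
    | cons W Ws' =>
      intro π hπ
      have h1 : π ∈ MergeCl (Inflate X Z) (Inflate X (MergeAll (W::Ws'))) :=
        lemmaA hX Z _ (inflate_mono (subset_refl X) h hπ)
      have h2 := ih (MergeAll (W::Ws')) (subset_refl _)
      exact mergeCl_mono (subset_refl _) h2 h1

lemma main2 (X : Set PPerm) :
    ∀ (Ys : List (Set PPerm)) (Y : Set PPerm), Y ⊆ MergeAll Ys →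
      Inflate Y X ⊆ MergeAll (Ys.map fun Z => Inflate Z X) := by
  intro Ys
  induction Ys with
  | nil => exact fun Y h => inflate_empty_right h
  | cons Z Ws ih =>
    intro Y h
    cases Ws with
    | nil => exact inflate_mono h (subset_refl X)
    | cons W Ws' =>
      intro π hπ
      have h1 : π ∈ MergeCl (Inflate Z X) (Inflate (MergeAll (W::Ws')) X) :=
        lemmaB Z _ X (inflate_mono h (subset_refl X) hπ)
      have h2 := ih (MergeAll (W::Ws')) (subset_refl _)
      exact mergeCl_mono (subset_refl _) h2 h1


/-- If `Y ⊆ Y₁ ⊙ ⋯ ⊙ Y_k`, then `X[Y] ⊆ X[Y₁] ⊙ ⋯ ⊙ X[Y_k]` and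
`Y[X] ⊆ Y₁[X] ⊙ ⋯ ⊙ Y_k[X]`. -/
theorem stmt6 (X Y : Set PPerm) (hX : IsPermClass X) (hY : IsPermClass Y)
    (Ys : List (Set PPerm)) (hsub : Y ⊆ MergeAll Ys) :
    Inflate X Y ⊆ MergeAll (Ys.map fun Z => Inflate X Z) ∧
    Inflate Y X ⊆ MergeAll (Ys.map fun Z => Inflate Z X) := by
  exact ⟨main1 hX Ys Y hsub, main2 X Ys Y hsub⟩
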